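/- arXiv:math/0310471 — 3 statements merged into one kernel-verified Lean document; each statement's English description precedes it below -/
import Mathlib

section
/- Suppose a collection C of subsets of [0,∞)² contains the diagonal, is closed under taking subsets and finite unions, and satisfies the generalised-ray axioms: closure under sumsets M + N, interval hulls M̄, and translation saturation {(x+a,y+a) : (x,y) ∈ M, a ∈ [0,∞)}. If C contains some set containing the point (0,α), then C contains the full metric neighbourhood of the diagonal D_α = {(x,y) ∈ [0,∞)² : |x-y| ≤ α}. -/
/-- The diagonal α-neighbourhood in [0,∞)². -/
def Dnbhd (α : ℝ) : Set (ℝ × ℝ) :=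
  {p | 0 ≤ p.1 ∧ 0 ≤ p.2 ∧ |p.1 - p.2| ≤ α}

/-- Sumset of two subsets of [0,∞)². -/
def sumSet (M N : Set (ℝ × ℝ)) : Set (ℝ × ℝ) :=
  {p | ∃ u v x y, (u, v) ∈ M ∧ (x, y) ∈ N ∧ p = (u + x, v + y)}

/-- The interval hull of a subset of [0,∞)². -/
def intervalHull (M : Set (ℝ × ℝ)) : Set (ℝ × ℝ) :=
  {p | 0 ≤ p.1 ∧ 0 ≤ p.2 ∧ ∃ x y, (x, y) ∈ M ∧ x ≤ p.1 ∧ p.1 ≤ y ∧ x ≤ p.2 ∧ p.2 ≤ y}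

/-- Translation saturation of a subset of [0,∞)². -/
def translationSat (M : Set (ℝ × ℝ)) : Set (ℝ × ℝ) :=
  {p | ∃ x y a, (x, y) ∈ M ∧ 0 ≤ a ∧ p = (x + a, y + a)}

theorem generalised_ray_contains_metric_entourages
    (C : Set (Set (ℝ × ℝ)))
    (hdiag : {p : ℝ × ℝ | 0 ≤ p.1 ∧ p.1 = p.2} ∈ C)
    (hsub : ∀ M ∈ C, ∀ N, N ⊆ M → N ∈ C)
    (hunion : ∀ M ∈ C, ∀ N ∈ C, M ∪ N ∈ C)
    (hsum : ∀ M ∈ C, ∀ N ∈ C, sumSet M N ∈ C)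
    (hhull : ∀ M ∈ C, intervalHull M ∈ C)
    (htrans : ∀ M ∈ C, translationSat M ∈ C)
    (α : ℝ) (hα : 0 ≤ α)
    (hpt : ∃ M ∈ C, ((0 : ℝ), α) ∈ M) :
    Dnbhd α ∈ C := by
  obtain ⟨M, hM, hptM⟩ := hpt
  have hN : ({((0 : ℝ), α)} : Set (ℝ × ℝ)) ∈ C :=
    hsub M hM _ (by simpa using hptM)
  have hT := htrans _ hN
  have hH := hhull _ hT
  refine hsub _ hH _ ?_
  rintro ⟨p, q⟩ ⟨hp, hq, habs⟩
  refine ⟨hp, hq, min p q, α + min p q, ⟨0, α, min p q, rfl, le_min hp hq, by ring_nf⟩,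
    min_le_left _ _, ?_, min_le_right _ _, ?_⟩ <;>
  · rcases abs_le.1 habs with ⟨h1, h2⟩
    rcases le_total p q with h | h <;> simp [min_eq_left, min_eq_right, h] <;> linarith
end

section
/- The continuously controlled coarse structure on [0,∞) is not countably generated: for every sequence (M_n) of cc-entourages there exists a cc-entourage M that is not contained in any M_n. Consequently this coarse structure is not induced by any metric. -/
/-- The half-line [0,∞) as a topological space. -/
abbrev HalfLine : Type := {x : ℝ // 0 ≤ x}

/-- A cc-entourage: contained in an open set all of whose horizontal and
vertical fibers are bounded. -/
def IsCCEntourage (M : Set (HalfLine × HalfLine)) : Prop :=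
  ∃ U : Set (HalfLine × HalfLine), M ⊆ U ∧ IsOpen U ∧
    ∀ x : HalfLine, Bornology.IsBounded {y | (x, y) ∈ U} ∧
      Bornology.IsBounded {y | (y, x) ∈ U}

private lemma nat_eq_of_abs_lt_one {n m : ℕ} (h : |(n : ℝ) - m| < 1) : n = m := by
  rcases lt_trichotomy n m with hlt | he | hlt
  · have : (n : ℝ) + 1 ≤ m := by exact_mod_cast Nat.succ_le_of_lt hlt
    have := abs_lt.mp h
    linarith
  · exact he
  · have : (m : ℝ) + 1 ≤ n := by exact_mod_cast Nat.succ_le_of_lt hlt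
    have := abs_lt.mp h
    linarith

theorem ccStructure_not_countably_generated :
    ∀ M : ℕ → Set (HalfLine × HalfLine), (∀ n, IsCCEntourage (M n)) →
      ∃ M' : Set (HalfLine × HalfLine), IsCCEntourage M' ∧ ∀ n, ¬ M' ⊆ M n := by
  intro M hM
  choose U hMU hUopen hUb using hM
  -- a bound on the horizontal fiber of Uₙ at the point n
  have hb : ∀ n : ℕ, ∃ r : ℝ, ∀ y : HalfLine,
      ((⟨(n : ℝ), n.cast_nonneg⟩ : HalfLine), y) ∈ U n → y.val ≤ r := by
    intro n
    obtain ⟨r, hr⟩ :=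
      ((hUb n ⟨(n : ℝ), n.cast_nonneg⟩).1).subset_closedBall (⟨0, le_refl 0⟩ : HalfLine)
    refine ⟨r, fun y hy => ?_⟩
    have := hr hy
    simpa [Metric.mem_closedBall, Subtype.dist_eq, Real.dist_eq, abs_of_nonneg y.2] using this
  choose r hr using hb
  -- running maximum of the bounds
  set f : ℕ → ℝ := fun n => (Finset.range (n + 1)).sup' (by simp) r with hf
  have hfmono : Monotone f := by
    intro a b hab
    exact Finset.sup'_le _ _ fun k hk =>
      Finset.le_sup' r (Finset.mem_range.mpr (lt_of_lt_of_le (Finset.mem_range.mp hk)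
        (by omega)))
  have hfr : ∀ n, r n ≤ f n := fun n =>
    Finset.le_sup' r (Finset.mem_range.mpr (Nat.lt_succ_self n))
  set yv : ℕ → ℝ := fun n => (n : ℝ) + 1 + max (f n) 0 with hyv
  have hyv_nonneg : ∀ n, 0 ≤ yv n := fun n => by
    have : (0:ℝ) ≤ max (f n) 0 := le_max_right _ _
    have : (0:ℝ) ≤ (n:ℝ) := n.cast_nonneg
    simp only [hyv]; positivity
  have hyv_gt : ∀ n, r n < yv n := fun n => by
    have h1 := hfr n
    have h2 : f n ≤ max (f n) 0 := le_max_left _ _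
    have : (0:ℝ) ≤ (n:ℝ) := n.cast_nonneg
    simp only [hyv]; linarith
  have hyv_space : ∀ m n : ℕ, m ≠ n → 1 ≤ |yv m - yv n| := by
    have key : ∀ m n : ℕ, m < n → 1 ≤ yv n - yv m := by
      intro m n hmn
      have h1 : max (f m) 0 ≤ max (f n) 0 :=
        max_le_max (hfmono (le_of_lt hmn)) le_rfl
      have h2 : (m : ℝ) + 1 ≤ (n : ℝ) := by exact_mod_cast Nat.succ_le_of_lt hmn
      simp only [hyv]; linarith
    intro m n hmn
    rcases lt_or_gt_of_ne hmn with h | h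
    · rw [abs_sub_comm]; exact le_trans (key m n h) (le_abs_self _)
    · exact le_trans (key n m h) (le_abs_self _)
  -- the diagonal points
  set g : ℕ → HalfLine × HalfLine := fun n =>
    (⟨(n : ℝ), n.cast_nonneg⟩, ⟨yv n, hyv_nonneg n⟩) with hg
  refine ⟨Set.range g, ⟨⋃ n, Metric.ball (g n).1 (1/2) ×ˢ Metric.ball (g n).2 (1/2),
    ?_, ?_, ?_⟩, ?_⟩
  · rintro p ⟨n, rfl⟩
    exact Set.mem_iUnion.mpr ⟨n, by simp⟩
  · exact isOpen_iUnion fun n => (Metric.isOpen_ball).prod Metric.isOpen_ball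
  · intro x
    constructor
    · -- horizontal fiber
      by_cases h : ∃ n, dist x (g n).1 < 1/2
      · obtain ⟨n0, hn0⟩ := h
        refine (Metric.isBounded_ball (x := (g n0).2) (r := 1/2)).subset ?_
        rintro y hy
        obtain ⟨n, hn⟩ := Set.mem_iUnion.mp hy
        obtain ⟨hn1, hn2⟩ := hn
        have heq : n = n0 := by
          apply nat_eq_of_abs_lt_one
          have : dist (g n).1 (g n0).1 < 1 := by
            calc dist (g n).1 (g n0).1 ≤ dist (g n).1 x + dist x (g n0).1 := dist_triangle _ _ _
            _ < 1/2 + 1/2 := by rw [dist_comm (g n).1 x]; exact add_lt_add hn1 hn0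
            _ = 1 := by norm_num
          simpa [hg, Subtype.dist_eq, Real.dist_eq] using this
        rw [heq] at hn2
        exact hn2
      · have : {y | (x, y) ∈ ⋃ n, Metric.ball (g n).1 (1/2) ×ˢ Metric.ball (g n).2 (1/2)} = ∅ := by
          ext y
          simp only [Set.mem_setOf_eq, Set.mem_iUnion, Set.mem_empty_iff_false, iff_false]
          rintro ⟨n, hn1, _⟩
          exact h ⟨n, hn1⟩
        rw [this]; exact Bornology.isBounded_empty
    · -- vertical fiber
      by_cases h : ∃ n, dist x (g n).2 < 1/2
      · obtain ⟨n0, hn0⟩ := h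
        refine (Metric.isBounded_ball (x := (g n0).1) (r := 1/2)).subset ?_
        rintro y hy
        obtain ⟨n, hn⟩ := Set.mem_iUnion.mp hy
        obtain ⟨hn1, hn2⟩ := hn
        have heq : n = n0 := by
          by_contra hne
          have hs := hyv_space n n0 hne
          have : dist (g n).2 (g n0).2 < 1 := by
            calc dist (g n).2 (g n0).2 ≤ dist (g n).2 x + dist x (g n0).2 := dist_triangle _ _ _
            _ < 1/2 + 1/2 := by rw [dist_comm (g n).2 x]; exact add_lt_add hn2 hn0
            _ = 1 := by norm_num
          rw [hg] at this
          simp only [Subtype.dist_eq, Real.dist_eq] at this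
          linarith [hs, this]
        rw [heq] at hn1
        exact hn1
      · have : {y | (y, x) ∈ ⋃ n, Metric.ball (g n).1 (1/2) ×ˢ Metric.ball (g n).2 (1/2)} = ∅ := by
          ext y
          simp only [Set.mem_setOf_eq, Set.mem_iUnion, Set.mem_empty_iff_false, iff_false]
          rintro ⟨n, _, hn2⟩
          exact h ⟨n, hn2⟩
        rw [this]; exact Bornology.isBounded_empty
  · intro n hsub
    have hmem : g n ∈ M n := hsub ⟨n, rfl⟩
    have := hr n ⟨yv n, hyv_nonneg n⟩ (hMU n hmem)
    exact absurd this (not_le.mpr (hyv_gt n))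
end

section
/- Let R denote [0,∞) with the spiral coarse structure: the coarse structure pulled back from the Euclidean metric on ℝ² along the Archimedean spiral embedding σ(t) = (√t·cos(2π√t), √t·sin(2π√t)). Then σ : R → ℝ² has coarsely dense image: there is a constant C such that every point of ℝ² is within Euclidean distance C of the image of σ. Consequently R with this coarse structure is coarsely equivalent to ℝ², and in particular R is not coarsely equivalent to [0,∞) with its metric coarse structure. -/
open Real

/-- The Archimedean spiral embedding of the ray into the plane. -/
noncomputable def spiral (t : ℝ) : ℝ × ℝ :=
  (Real.sqrt t * Real.cos (2 * π * Real.sqrt t),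
   Real.sqrt t * Real.sin (2 * π * Real.sqrt t))

/-!
In polar coordinates `spiral (s ^ 2)` is the point of radius `s` and angle `2πs`, so the spiral meets
every ray from the origin once per unit of radius. A point of radius `r` and angle `θ` is therefore
within distance `1` of the spiral point at the same angle whose radius lies in `[r, r + 1)`. Any
choice of such near preimages is a coarse inverse: it is controlled by the triangle inequality.
-/

theorem exists_polarCoord_symm_eq (p : ℝ × ℝ) : ∃ r θ : ℝ, 0 ≤ r ∧ polarCoord.symm (r, θ) = p :=
  ⟨‖Complex.equivRealProd.symm p‖, Complex.arg (Complex.equivRealProd.symm p), norm_nonneg _,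
    Prod.ext (Complex.norm_mul_cos_arg _) (Complex.norm_mul_sin_arg _)⟩

theorem polarCoord_symm_add_int_mul_two_pi (r θ : ℝ) (n : ℤ) :
    polarCoord.symm (r, θ + n * (2 * π)) = polarCoord.symm (r, θ) := by
  simp only [polarCoord_symm_apply, cos_add_int_mul_two_pi, sin_add_int_mul_two_pi]

theorem dist_polarCoord_symm_le (r s θ : ℝ) :
    dist (polarCoord.symm (s, θ)) (polarCoord.symm (r, θ)) ≤ |s - r| := by
  have h (ρ : ℝ) : polarCoord.symm (ρ, θ) = ρ • (cos θ, sin θ) := by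
    simp [polarCoord_symm_apply]
  calc dist (polarCoord.symm (s, θ)) (polarCoord.symm (r, θ))
      ≤ dist s r * dist (cos θ, sin θ) 0 := by rw [h, h]; exact dist_pair_smul s r _
    _ ≤ |s - r| * 1 := by
        rw [Real.dist_eq, dist_zero_right, Prod.norm_def, Real.norm_eq_abs, Real.norm_eq_abs]
        gcongr
        exact max_le (abs_cos_le_one θ) (abs_sin_le_one θ)
    _ = |s - r| := mul_one _

theorem spiral_sq {s : ℝ} (hs : 0 ≤ s) : spiral (s ^ 2) = polarCoord.symm (s, 2 * π * s) := by
  simp [spiral, sqrt_sq hs]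

theorem exists_spiral_dist_le_one (p : ℝ × ℝ) : ∃ t, 0 ≤ t ∧ dist (spiral t) p ≤ 1 := by
  obtain ⟨r, θ, hr, rfl⟩ := exists_polarCoord_symm_eq p
  obtain ⟨n, ⟨hrs, hsr⟩, -⟩ := existsUnique_add_zsmul_mem_Ico one_pos (θ / (2 * π)) r
  set s := θ / (2 * π) + n • (1 : ℝ)
  have hangle : 2 * π * s = θ + n * (2 * π) := by
    simp only [s, zsmul_eq_mul, mul_one]; field_simp
  refine ⟨s ^ 2, sq_nonneg s, ?_⟩
  calc dist (spiral (s ^ 2)) (polarCoord.symm (r, θ))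
      = dist (polarCoord.symm (s, θ)) (polarCoord.symm (r, θ)) := by
        rw [spiral_sq (hr.trans hrs), hangle, polarCoord_symm_add_int_mul_two_pi]
    _ ≤ |s - r| := dist_polarCoord_symm_le r s θ
    _ ≤ 1 := by rw [abs_le]; constructor <;> linarith

theorem dist_comp_le_of_dist_le {α X : Type*} [PseudoMetricSpace X] {f : α → X} {g : X → α}
    {C : ℝ} (hfg : ∀ x, dist (f (g x)) x ≤ C) {a : ℝ} {x y : X} (hxy : dist x y ≤ a) :
    dist (f (g x)) (f (g y)) ≤ a + 2 * C := by
  have hx := hfg x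
  have hy := hfg y
  have := dist_triangle4 (f (g x)) x y (f (g y))
  rw [dist_comm (f (g y))] at hy
  linarith

theorem spiral_coarsely_dense_and_equivalence :
    ∃ C : ℝ, 0 ≤ C ∧
      -- the image of the spiral is coarsely dense in ℝ²
      (∀ p : ℝ × ℝ, ∃ t : ℝ, 0 ≤ t ∧ dist (spiral t) p ≤ C) ∧
      -- hence the spiral is a coarse equivalence from the ray with the
      -- pullback coarse structure to ℝ²: there is a coarse inverse g
      (∃ g : ℝ × ℝ → ℝ,
        (∀ p : ℝ × ℝ, 0 ≤ g p) ∧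
        -- spiral ∘ g is close to the identity of ℝ²
        (∀ p : ℝ × ℝ, dist (spiral (g p)) p ≤ C) ∧
        -- g is controlled (with respect to the pullback structure on the ray)
        (∀ α : ℝ, 0 ≤ α → ∃ β : ℝ, 0 ≤ β ∧ ∀ p q : ℝ × ℝ, dist p q ≤ α →
          dist (spiral (g p)) (spiral (g q)) ≤ β) ∧
        -- g ∘ spiral is close to the identity of the ray, measured in the
        -- pullback coarse structure
        (∀ t : ℝ, 0 ≤ t → dist (spiral (g (spiral t))) (spiral t) ≤ C)) := by
  choose g hg_nonneg hg using exists_spiral_dist_le_one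
  refine ⟨1, zero_le_one, fun p => ⟨g p, hg_nonneg p, hg p⟩, g, hg_nonneg, hg, ?_, fun t _ => hg _⟩
  exact fun α hα => ⟨α + 2 * 1, by positivity, fun _ _ => dist_comp_le_of_dist_le hg⟩
end
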